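/- Let X = {0,1}^{d−1} × {0} ⊂ ℝ^d be the vertex set of the unit hypercube and let x₀ = (1/2, …, 1/2, c) ∈ ℝ^d with c > √(d−1)/2. Then there exists δ > 0 such that for every map x ↦ x' from X to ℝ^d with |x − x'| ≤ δ for all x ∈ X for which the set {x' : x ∈ X} is an acute set of size 2^{d−1}, the enlarged set {x₀} ∪ {x' : x ∈ X} is an acute set of size 2^{d−1}+1. -/

import Mathlib

/-- The vertex set `{0,1}^(d-1) × {0}` of the `(d-1)`-dimensional unit hypercube
embedded in `ℝ^d` with last coordinate `0`. -/
def hypercube (d : ℕ) : Set (EuclideanSpace ℝ (Fin d)) :=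
  {v | ∀ i : Fin d, if (i : ℕ) = d - 1 then v i = 0 else v i = 0 ∨ v i = 1}

/-!
The cube vertices lie on the sphere of radius `√(d-1)/2` about `m = (1/2, …, 1/2, 0)`, in the
hyperplane through `m` orthogonal to `x₀ - m = c • e_d`. For two such points `y, z` this gives
`⟪y - x₀, z - x₀⟫ ≥ c² - (d-1)/4 > 0` and `⟪x₀ - y, z - y⟫ = ‖z - y‖² / 2 ≥ 1/2` when `y ≠ z`,
so every angle of a triangle containing `x₀` is acute with a uniform margin. Moving the cube
points by at most `δ` changes these inner products by `O(δ)`, so the margins survive for small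
`δ`; with `y = z` the first bound also shows that `x₀` is not a perturbed point.
-/

open EuclideanGeometry Real Topology
open scoped RealInnerProductSpace

section InnerProductSpace

variable {V : Type*} [NormedAddCommGroup V] [InnerProductSpace ℝ V]

def IsAcuteSet (S : Set V) : Prop :=
  ∀ p ∈ S, ∀ q ∈ S, ∀ r ∈ S, p ≠ q → q ≠ r → p ≠ r → ∠ p q r < π / 2

theorem angle_lt_pi_div_two_of_inner_pos {p q r : V} (h : 0 < ⟪p - q, r - q⟫) :
    ∠ p q r < π / 2 := by
  have hpq : p - q ≠ 0 := by rintro h0; simp [h0] at h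
  have hrq : r - q ≠ 0 := by rintro h0; simp [h0] at h
  rw [EuclideanGeometry.angle, vsub_eq_sub, vsub_eq_sub, InnerProductGeometry.angle,
    Real.arccos_lt_pi_div_two]
  exact div_pos h (mul_pos (norm_pos_iff.2 hpq) (norm_pos_iff.2 hrq))

theorem IsAcuteSet.insert {S : Set V} {x : V} (hS : IsAcuteSet S)
    (hapex : ∀ p ∈ S, ∀ r ∈ S, p ≠ r → ∠ p x r < π / 2)
    (hbase : ∀ q ∈ S, ∀ r ∈ S, q ≠ r → ∠ x q r < π / 2) :
    IsAcuteSet (insert x S) := by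
  rintro p (rfl | hp) q (rfl | hq) r (rfl | hr) hpq hqr hpr
  · exact absurd rfl hpq
  · exact absurd rfl hpq
  · exact absurd rfl hpr
  · exact hbase q hq r hr hqr
  · exact absurd rfl hqr
  · exact hapex p hp r hr hpr
  · rw [angle_comm]
    exact hbase q hq p hp hpq.symm
  · exact hS p hp q hq r hr hpq hqr hpr

theorem inner_sub_le_inner_of_norm_sub_le {u v u' v' : V} {R ε : ℝ} (hu : ‖u‖ ≤ R)
    (hv : ‖v‖ ≤ R) (hu' : ‖u - u'‖ ≤ ε) (hv' : ‖v - v'‖ ≤ ε) :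
    ⟪u, v⟫ - ε * (2 * R + ε) ≤ ⟪u', v'⟫ := by
  have hdiff : ⟪u, v⟫ - ⟪u', v'⟫ = ⟪u - u', v⟫ + ⟪u', v - v'⟫ := by
    simp only [inner_sub_left, inner_sub_right]
    ring
  have hnorm_u' : ‖u'‖ ≤ R + ε :=
    calc ‖u'‖ = ‖u - (u - u')‖ := by rw [sub_sub_cancel]
      _ ≤ ‖u‖ + ‖u - u'‖ := norm_sub_le _ _
      _ ≤ R + ε := add_le_add hu hu'
  have hε : 0 ≤ ε := (norm_nonneg _).trans hu'
  have h₁ : ⟪u - u', v⟫ ≤ ε * R :=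
    (real_inner_le_norm _ _).trans (mul_le_mul hu' hv (norm_nonneg _) hε)
  have h₂ : ⟪u', v - v'⟫ ≤ (R + ε) * ε :=
    (real_inner_le_norm _ _).trans
      (mul_le_mul hnorm_u' hv' (norm_nonneg _) ((norm_nonneg _).trans hnorm_u'))
  linarith

section Sphere

variable {m x₀ y z : V} {ρ : ℝ}

theorem sq_norm_sub_sq_le_inner_sub_apex (hy : ‖y - m‖ = ρ) (hz : ‖z - m‖ = ρ)
    (hyo : ⟪x₀ - m, y - m⟫ = 0) (hzo : ⟪x₀ - m, z - m⟫ = 0) :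
    ‖x₀ - m‖ ^ 2 - ρ ^ 2 ≤ ⟪y - x₀, z - x₀⟫ := by
  have hsplit : ⟪y - x₀, z - x₀⟫ = ⟪y - m, z - m⟫ + ‖x₀ - m‖ ^ 2 := by
    rw [show y - x₀ = (y - m) - (x₀ - m) by abel, show z - x₀ = (z - m) - (x₀ - m) by abel]
    generalize y - m = a, z - m = b, x₀ - m = h at *
    simp only [inner_sub_left, inner_sub_right, real_inner_comm h, hyo, hzo,
      real_inner_self_eq_norm_sq]
    ring
  have hcs : -(ρ ^ 2) ≤ ⟪y - m, z - m⟫ := by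
    have := (abs_le.1 (abs_real_inner_le_norm (y - m) (z - m))).1
    rwa [hy, hz, ← sq] at this
  linarith

theorem inner_apex_sub_eq_sq_norm_div_two (hy : ‖y - m‖ = ρ) (hz : ‖z - m‖ = ρ)
    (hyo : ⟪x₀ - m, y - m⟫ = 0) (hzo : ⟪x₀ - m, z - m⟫ = 0) :
    ⟪x₀ - y, z - y⟫ = ‖z - y‖ ^ 2 / 2 := by
  rw [show x₀ - y = (x₀ - m) - (y - m) by abel, show z - y = (z - m) - (y - m) by abel]
  generalize y - m = a, z - m = b, x₀ - m = h at *
  rw [norm_sub_sq_real, hz]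
  simp only [inner_sub_left, inner_sub_right, hyo, hzo, real_inner_self_eq_norm_sq, hy,
    real_inner_comm a b]
  ring

variable {y' z' : V} {δ : ℝ}

theorem inner_perturbed_sub_apex_pos (hy : ‖y - m‖ = ρ) (hz : ‖z - m‖ = ρ)
    (hyo : ⟪x₀ - m, y - m⟫ = 0) (hzo : ⟪x₀ - m, z - m⟫ = 0)
    (hy' : ‖y - y'‖ ≤ δ) (hz' : ‖z - z'‖ ≤ δ)
    (hδ : 2 * δ * (2 * (2 * ρ + ‖x₀ - m‖) + 2 * δ) < ‖x₀ - m‖ ^ 2 - ρ ^ 2) :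
    0 < ⟪y' - x₀, z' - x₀⟫ := by
  have hδ₀ : 0 ≤ δ := (norm_nonneg _).trans hy'
  have hyx : ‖y - x₀‖ ≤ 2 * ρ + ‖x₀ - m‖ := by
    linarith [norm_sub_le_norm_sub_add_norm_sub y m x₀, norm_sub_rev m x₀, norm_nonneg (y - m)]
  have hzx : ‖z - x₀‖ ≤ 2 * ρ + ‖x₀ - m‖ := by
    linarith [norm_sub_le_norm_sub_add_norm_sub z m x₀, norm_sub_rev m x₀, norm_nonneg (z - m)]
  have := inner_sub_le_inner_of_norm_sub_le (u' := y' - x₀) (v' := z' - x₀) (ε := 2 * δ) hyx hzx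
    (by simpa using hy'.trans (by linarith)) (by simpa using hz'.trans (by linarith))
  linarith [sq_norm_sub_sq_le_inner_sub_apex hy hz hyo hzo]

theorem inner_apex_sub_perturbed_pos (hy : ‖y - m‖ = ρ) (hz : ‖z - m‖ = ρ)
    (hyo : ⟪x₀ - m, y - m⟫ = 0) (hzo : ⟪x₀ - m, z - m⟫ = 0)
    (hy' : ‖y - y'‖ ≤ δ) (hz' : ‖z - z'‖ ≤ δ)
    (hδ : 2 * δ * (2 * (2 * ρ + ‖x₀ - m‖) + 2 * δ) < ‖z - y‖ ^ 2 / 2) :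
    0 < ⟪x₀ - y', z' - y'⟫ := by
  have hδ₀ : 0 ≤ δ := (norm_nonneg _).trans hy'
  have hxy : ‖x₀ - y‖ ≤ 2 * ρ + ‖x₀ - m‖ := by
    linarith [norm_sub_le_norm_sub_add_norm_sub x₀ m y, norm_sub_rev m y, norm_nonneg (y - m)]
  have hside : ‖z - y‖ ≤ 2 * ρ + ‖x₀ - m‖ := by
    linarith [norm_sub_le_norm_sub_add_norm_sub z m y, norm_sub_rev m y, norm_nonneg (x₀ - m)]
  have hside' : ‖(z - y) - (z' - y')‖ ≤ 2 * δ := by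
    rw [show (z - y) - (z' - y') = (z - z') - (y - y') by abel]
    linarith [norm_sub_le (z - z') (y - y')]
  have := inner_sub_le_inner_of_norm_sub_le (u' := x₀ - y') (ε := 2 * δ)
    hxy hside (by simpa [norm_sub_rev] using hy'.trans (by linarith)) hside'
  linarith [inner_apex_sub_eq_sq_norm_div_two hy hz hyo hzo]

theorem exists_isAcuteSet_insert_of_subset_sphere {S : Set V} {η : ℝ}
    (hS : S ⊆ Metric.sphere m ρ) (hρ₀ : 0 ≤ ρ) (hρ : ρ < ‖x₀ - m‖)
    (horth : ∀ y ∈ S, ⟪x₀ - m, y - m⟫ = 0) (hη : 0 < η)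
    (hsep : ∀ y ∈ S, ∀ z ∈ S, y ≠ z → η ≤ ‖z - y‖) :
    ∃ δ > 0, ∀ f : V → V, (∀ y ∈ S, dist y (f y) ≤ δ) → IsAcuteSet (f '' S) →
      x₀ ∉ f '' S ∧ IsAcuteSet (insert x₀ (f '' S)) := by
  set κ := min (‖x₀ - m‖ ^ 2 - ρ ^ 2) (η ^ 2 / 2)
  have hκ : 0 < κ := lt_min (by nlinarith) (by positivity)
  have hloss : ∀ᶠ δ in 𝓝[>] (0 : ℝ), 2 * δ * (2 * (2 * ρ + ‖x₀ - m‖) + 2 * δ) < κ := by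
    have hcont : Continuous fun δ : ℝ => 2 * δ * (2 * (2 * ρ + ‖x₀ - m‖) + 2 * δ) := by
      fun_prop
    exact nhdsWithin_le_nhds ((hcont.tendsto 0).eventually_lt_const (by simpa using hκ))
  obtain ⟨δ, hδ, hδpos⟩ := (hloss.and self_mem_nhdsWithin).exists
  refine ⟨δ, hδpos, fun f hf hacute => ?_⟩
  have hρS : ∀ y ∈ S, ‖y - m‖ = ρ := fun y hy => mem_sphere_iff_norm.1 (hS hy)
  have hmove : ∀ y ∈ S, ‖y - f y‖ ≤ δ := fun y hy => dist_eq_norm y (f y) ▸ hf y hy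
  have hapex : ∀ y ∈ S, ∀ z ∈ S, 0 < ⟪f y - x₀, f z - x₀⟫ := fun y hy z hz =>
    inner_perturbed_sub_apex_pos (hρS y hy) (hρS z hz) (horth y hy) (horth z hz)
      (hmove y hy) (hmove z hz) (hδ.trans_le (min_le_left _ _))
  have hbase : ∀ y ∈ S, ∀ z ∈ S, y ≠ z → 0 < ⟪x₀ - f y, f z - f y⟫ := by
    intro y hy z hz hyz
    refine inner_apex_sub_perturbed_pos (hρS y hy) (hρS z hz) (horth y hy) (horth z hz)
      (hmove y hy) (hmove z hz) (hδ.trans_le ((min_le_right _ _).trans ?_))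
    gcongr
    exact hsep y hy z hz hyz
  have hx₀ : x₀ ∉ f '' S := by
    rintro ⟨y, hy, hfy⟩
    simpa [hfy] using hapex y hy y hy
  refine ⟨hx₀, hacute.insert ?_ ?_⟩
  · rintro _ ⟨y, hy, rfl⟩ _ ⟨z, hz, rfl⟩ -
    exact angle_lt_pi_div_two_of_inner_pos (hapex y hy z hz)
  · rintro _ ⟨y, hy, rfl⟩ _ ⟨z, hz, rfl⟩ hyz
    exact angle_lt_pi_div_two_of_inner_pos (hbase y hy z hz (ne_of_apply_ne f hyz))

end Sphere

end InnerProductSpace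

section Hypercube

variable {n : ℕ} {y z : EuclideanSpace ℝ (Fin (n + 1))}

noncomputable def cubeCenter (n : ℕ) : EuclideanSpace ℝ (Fin (n + 1)) :=
  WithLp.toLp 2 (Fin.lastCases 0 fun _ => 1 / 2)

theorem mem_hypercube_succ : y ∈ hypercube (n + 1) ↔
    y (Fin.last n) = 0 ∧ ∀ i : Fin n, y i.castSucc = 0 ∨ y i.castSucc = 1 := by
  simp [hypercube, Fin.forall_fin_succ', and_comm, (Fin.is_lt _).ne]

theorem norm_sub_cubeCenter (hy : y ∈ hypercube (n + 1)) : ‖y - cubeCenter n‖ = √n / 2 := by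
  rw [mem_hypercube_succ] at hy
  have hsq : ‖y - cubeCenter n‖ ^ 2 = (√n / 2) ^ 2 := by
    rw [EuclideanSpace.real_norm_sq_eq, Fin.sum_univ_castSucc, div_pow, sq_sqrt n.cast_nonneg]
    have hterm : ∀ i : Fin n, (y i.castSucc - 1 / 2) ^ 2 = (1 / 4 : ℝ) := fun i => by
      rcases hy.2 i with h | h <;> rw [h] <;> norm_num
    simp only [cubeCenter, PiLp.sub_apply, Fin.lastCases_castSucc,
      Fin.lastCases_last, hy.1, hterm, Finset.sum_const, Finset.card_univ, Fintype.card_fin,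
      nsmul_eq_mul]
    ring
  exact (pow_left_inj₀ (norm_nonneg _) (by positivity) two_ne_zero).1 hsq

theorem inner_single_last_sub_cubeCenter (c : ℝ) (hy : y ∈ hypercube (n + 1)) :
    ⟪EuclideanSpace.single (Fin.last n) c, y - cubeCenter n⟫ = 0 := by
  simp [EuclideanSpace.inner_single_left, cubeCenter, (mem_hypercube_succ.1 hy).1]

theorem one_le_norm_sub_of_mem_hypercube (hy : y ∈ hypercube (n + 1))
    (hz : z ∈ hypercube (n + 1)) (hyz : y ≠ z) : 1 ≤ ‖z - y‖ := by
  rw [mem_hypercube_succ] at hy hz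
  obtain ⟨i, hi⟩ : ∃ i, y i ≠ z i := by
    by_contra! h
    exact hyz (PiLp.ext h)
  rcases i.eq_castSucc_or_eq_last with ⟨j, rfl⟩ | rfl
  · have hone : |z j.castSucc - y j.castSucc| = 1 := by
      rcases hy.2 j with h | h <;> rcases hz.2 j with h' | h' <;> simp_all
    simpa [hone] using PiLp.norm_apply_le (z - y) j.castSucc
  · exact absurd (hy.1.trans hz.1.symm) hi

end Hypercube

/-- Let `x₀ = (1/2, …, 1/2, c) ∈ ℝ^d` with `c > √(d-1)/2`.  There exists `δ > 0` such
that whenever each vertex `x` of the hypercube `X = {0,1}^(d-1) × {0}` is moved by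
distance at most `δ` to a point `x'` in such a way that the resulting points form an
acute set of size `2^(d-1)`, the enlarged set with `x₀` added is an acute set of size
`2^(d-1) + 1`. -/
theorem add_apex_to_perturbed_cube (d : ℕ) (hd : 2 ≤ d) (c : ℝ)
    (hc : Real.sqrt ((d : ℝ) - 1) / 2 < c)
    (x₀ : EuclideanSpace ℝ (Fin d))
    (hx₀ : ∀ i : Fin d, x₀ i = if (i : ℕ) = d - 1 then c else 1 / 2) :
    ∃ δ > 0, ∀ f : EuclideanSpace ℝ (Fin d) → EuclideanSpace ℝ (Fin d),
      (∀ x ∈ hypercube d, dist x (f x) ≤ δ) →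
      (f '' hypercube d).ncard = 2 ^ (d - 1) →
      (∀ p ∈ f '' hypercube d, ∀ q ∈ f '' hypercube d, ∀ r ∈ f '' hypercube d,
        p ≠ q → q ≠ r → p ≠ r → EuclideanGeometry.angle p q r < Real.pi / 2) →
      (insert x₀ (f '' hypercube d)).ncard = 2 ^ (d - 1) + 1 ∧
      ∀ p ∈ insert x₀ (f '' hypercube d), ∀ q ∈ insert x₀ (f '' hypercube d),
        ∀ r ∈ insert x₀ (f '' hypercube d),
        p ≠ q → q ≠ r → p ≠ r → EuclideanGeometry.angle p q r < Real.pi / 2 := by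
  obtain ⟨n, rfl⟩ : ∃ n, d = n + 1 := ⟨d - 1, by omega⟩
  have hx₀m : x₀ - cubeCenter n = EuclideanSpace.single (Fin.last n) c := by
    ext i
    rcases i.eq_castSucc_or_eq_last with ⟨j, rfl⟩ | rfl <;>
      simp [hx₀, cubeCenter, (Fin.is_lt _).ne]
  have hheight : √n / 2 < ‖x₀ - cubeCenter n‖ := by
    rw [hx₀m, PiLp.norm_single, Real.norm_eq_abs]
    simpa using hc.trans_le (le_abs_self c)
  obtain ⟨δ, hδ, hinsert⟩ := exists_isAcuteSet_insert_of_subset_sphere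
    (fun y hy => mem_sphere_iff_norm.2 (norm_sub_cubeCenter hy)) (by positivity) hheight
    (fun y hy => hx₀m ▸ inner_single_last_sub_cubeCenter c hy) one_pos
    (fun y hy z hz => one_le_norm_sub_of_mem_hypercube hy hz)
  refine ⟨δ, hδ, fun f hf hcard hacute => ?_⟩
  obtain ⟨hx₀_notMem, hacute_insert⟩ := hinsert f hf hacute
  have hfin : (f '' hypercube (n + 1)).Finite := Set.finite_of_ncard_ne_zero (by simp [hcard])
  exact ⟨by rw [Set.ncard_insert_of_notMem hx₀_notMem hfin, hcard], hacute_insert⟩
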